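/- For all x ∈ (0,1] and all y ∈ [0, 1−x], (1−y)·(1−y−x) + y·(y+x) + 2·√( (1−y)·(1−y−x)·y·(y+x) ) ≥ 1 − x. Equivalently, the uniform pairwise rate satisfies r(y, y+x) ≤ −log(1−x). -/

import Mathlib

/-!
With `p ≤ q` in `[0,1]`, write `(1-p)(1-q)·pq = (p(1-q))·((1-p)q)`; the second factor exceeds the
first by `q - p ≥ 0`, so `√((1-p)(1-q)pq) ≥ p(1-q)`. Replacing the root by `p(1-q)` in
`(√((1-p)(1-q)) + √(pq))² = (1-p)(1-q) + pq + 2√((1-p)(1-q)pq)` leaves exactly `1 - (q - p)`,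
and taking logarithms gives the bound on the rate.
-/

open Real

/-- The uniform pairwise rate `r(p,q) = -2·log[√((1-p)(1-q)) + √(pq)]`. -/
noncomputable def uniRate (p q : ℝ) : ℝ :=
  -2 * Real.log (Real.sqrt ((1 - p) * (1 - q)) + Real.sqrt (p * q))

lemma le_sqrt_mul_of_le {u v : ℝ} (hu : 0 ≤ u) (huv : u ≤ v) : u ≤ √(u * v) :=
  le_sqrt_of_sq_le (by nlinarith)

lemma sqrt_add_sqrt_sq {a b : ℝ} (ha : 0 ≤ a) (hb : 0 ≤ b) :
    (√a + √b) ^ 2 = a + b + 2 * √(a * b) := by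
  rw [add_sq, sq_sqrt ha, sq_sqrt hb, sqrt_mul ha]
  ring

/-- The Bhattacharyya coefficient of the Bernoulli laws with parameters `p` and `q`. -/
noncomputable def bhattacharyya (p q : ℝ) : ℝ :=
  √((1 - p) * (1 - q)) + √(p * q)

section

variable {p q : ℝ}

lemma bhattacharyya_sq (hp : 0 ≤ p) (hpq : p ≤ q) (hq : q ≤ 1) :
    bhattacharyya p q ^ 2 = (1 - p) * (1 - q) + p * q + 2 * √((1 - p) * (1 - q) * p * q) := by
  rw [bhattacharyya, sqrt_add_sqrt_sq (by nlinarith) (by nlinarith), ← mul_assoc]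

lemma one_sub_sub_le_bhattacharyya_sq (hp : 0 ≤ p) (hpq : p ≤ q) (hq : q ≤ 1) :
    1 - (q - p) ≤ bhattacharyya p q ^ 2 := by
  have hroot : p * (1 - q) ≤ √((1 - p) * (1 - q) * p * q) := by
    have := le_sqrt_mul_of_le (u := p * (1 - q)) (v := (1 - p) * q)
      (by nlinarith) (by nlinarith)
    rwa [show p * (1 - q) * ((1 - p) * q) = (1 - p) * (1 - q) * p * q by ring] at this
  rw [bhattacharyya_sq hp hpq hq]
  linarith

lemma uniRate_le_neg_log (hp : 0 ≤ p) (hpq : p ≤ q) (hq : q ≤ 1) :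
    uniRate p q ≤ -log (1 - (q - p)) := by
  rcases (show 0 ≤ 1 - (q - p) by linarith).eq_or_lt with hzero | hpos
  · -- at `p = 0, q = 1` both sides are `0`, through the junk value `log 0 = 0`
    obtain ⟨rfl, rfl⟩ : p = 0 ∧ q = 1 := ⟨by linarith, by linarith⟩
    simp [uniRate]
  · have hrate : uniRate p q = -log (bhattacharyya p q ^ 2) := by
      rw [log_pow, uniRate, bhattacharyya]
      push_cast
      ring
    rw [hrate, neg_le_neg_iff]
    exact log_le_log hpos (one_sub_sub_le_bhattacharyya_sq hp hpq hq)

end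

theorem boundary_rate_dominates_general
    (x y : ℝ) (hx : 0 < x) (hy : 0 ≤ y) (hyx : y ≤ 1 - x) :
    1 - x ≤ (1 - y) * (1 - y - x) + y * (y + x)
        + 2 * Real.sqrt ((1 - y) * (1 - y - x) * y * (y + x)) ∧
      uniRate y (y + x) ≤ -Real.log (1 - x) := by
  have hpq : y ≤ y + x := by linarith
  have hq : y + x ≤ 1 := by linarith
  have hshift : 1 - (y + x - y) = 1 - x := by ring
  have hsub : 1 - (y + x) = 1 - y - x := by ring
  constructor
  · have := one_sub_sub_le_bhattacharyya_sq hy hpq hq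
    rwa [bhattacharyya_sq hy hpq hq, hshift, hsub] at this
  · simpa only [hshift] using uniRate_le_neg_log hy hpq hq

/-- **Adjacent levels at the boundary have the extreme rate.**
For `x ∈ (0,1]` and `y ∈ [0,1-x]`,
`(1-y)(1-y-x) + y(y+x) + 2√((1-y)(1-y-x)·y·(y+x)) ≥ 1-x`; equivalently
`r(y, y+x) ≤ -log(1-x)`. -/
theorem boundary_rate_dominates
    (x y : ℝ) (hx : 0 < x) (hx1 : x ≤ 1) (hy : 0 ≤ y) (hyx : y ≤ 1 - x) :
    1 - x ≤ (1 - y) * (1 - y - x) + y * (y + x)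
        + 2 * Real.sqrt ((1 - y) * (1 - y - x) * y * (y + x)) ∧
      uniRate y (y + x) ≤ -Real.log (1 - x) :=
  boundary_rate_dominates_general x y hx hy hyx
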